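/- arXiv:2406.18799 — 2 statements merged into one kernel-verified Lean document; each statement's English description precedes it below -/
import Mathlib

section
/- Let G be a real number. Define the Wu–Yang south potential A_S on the open set U_S = ℝ³ \ {(0,0,t) : t ≥ 0} (the complement of the nonnegative z-axis) by A_S(x) = (−G / (‖x‖(‖x‖ − x₃))) • (−x₂, x₁, 0). Then A_S is continuously differentiable on U_S and curl A_S(x) = G • x / ‖x‖³ for every x ∈ U_S; i.e., A_S is a nonsingular local potential for the monopole field on its patch. -/
/-! Write `A_S = φ • V` with `φ = -G / (r (r - x₃))`, `r = ‖x‖`, and `V = (-x₂, x₁, 0)`.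
Since `V` is linear with `curl V = (0, 0, 2)`, the product rule gives
`curl A_S = (-x₁ ∂₃φ, -x₂ ∂₃φ, x₁ ∂₁φ + x₂ ∂₂φ + 2φ)`. The quotient rule gives
`∂₃φ = -G / r³`, which settles the first two components, and the third reduces to
`G x₃ / r³` using `x₁² + x₂² = r² - x₃²`. -/

noncomputable section

/-- A point of `ℝ³` from its three coordinates. -/
def vec3 (a b c : ℝ) : EuclideanSpace ℝ (Fin 3) :=
  (WithLp.equiv 2 (Fin 3 → ℝ)).symm ![a, b, c]

/-- The `i`-th partial derivative of the `j`-th component of a vector field on `ℝ³`. -/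
def pderiv3 (A : EuclideanSpace ℝ (Fin 3) → EuclideanSpace ℝ (Fin 3))
    (i j : Fin 3) (x : EuclideanSpace ℝ (Fin 3)) : ℝ :=
  fderiv ℝ (fun y => A y j) x (EuclideanSpace.single i 1)

/-- The curl `(∂₂A₃ − ∂₃A₂, ∂₃A₁ − ∂₁A₃, ∂₁A₂ − ∂₂A₁)` of a vector field on `ℝ³`. -/
def curl (A : EuclideanSpace ℝ (Fin 3) → EuclideanSpace ℝ (Fin 3))
    (x : EuclideanSpace ℝ (Fin 3)) : EuclideanSpace ℝ (Fin 3) :=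
  vec3 (pderiv3 A 1 2 x - pderiv3 A 2 1 x)
    (pderiv3 A 2 0 x - pderiv3 A 0 2 x)
    (pderiv3 A 0 1 x - pderiv3 A 1 0 x)

/-- The monopole field `B_G(x) = G • x / ‖x‖³`. -/
def monopoleField (G : ℝ) (x : EuclideanSpace ℝ (Fin 3)) : EuclideanSpace ℝ (Fin 3) :=
  (‖x‖ ^ 3)⁻¹ • (G • x)

/-- The complement of the nonnegative `z`-axis (a Dirac string). -/
def southPatch : Set (EuclideanSpace ℝ (Fin 3)) :=
  {x | x 0 = 0 ∧ x 1 = 0 ∧ 0 ≤ x 2}ᶜ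

/-- The Wu–Yang south potential `A_S(x) = (−G / (‖x‖(‖x‖ − x₃))) • (−x₂, x₁, 0)`. -/
def wuYangSouth (G : ℝ) (x : EuclideanSpace ℝ (Fin 3)) : EuclideanSpace ℝ (Fin 3) :=
  (-G / (‖x‖ * (‖x‖ - x 2))) • vec3 (-(x 1)) (x 0) 0

open EuclideanSpace

local notation "E3" => EuclideanSpace ℝ (Fin 3)

theorem hasFDerivAt_norm_of_ne_zero {E : Type*} [NormedAddCommGroup E] [InnerProductSpace ℝ E]
    {x : E} (hx : x ≠ 0) : HasFDerivAt (fun y : E => ‖y‖) (‖x‖⁻¹ • innerSL ℝ x) x := by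
  have hsqrt := (hasStrictFDerivAt_norm_sq x).hasFDerivAt.sqrt (by simpa using hx)
  simp only [Real.sqrt_sq (norm_nonneg _)] at hsqrt
  convert hsqrt using 1
  ext v
  simp only [smul_apply, coe_innerSL_apply, smul_eq_mul, nsmul_eq_mul, Nat.cast_ofNat]
  field_simp

theorem fderiv_euclideanSpace_apply {ι : Type*} [Fintype ι] (x : EuclideanSpace ℝ ι) (i : ι) :
    fderiv ℝ (fun y : EuclideanSpace ℝ ι => y i) x = proj i :=
  (proj (𝕜 := ℝ) i).fderiv

@[simp] theorem vec3_apply_zero (a b c : ℝ) : vec3 a b c 0 = a := rfl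
@[simp] theorem vec3_apply_one (a b c : ℝ) : vec3 a b c 1 = b := rfl
@[simp] theorem vec3_apply_two (a b c : ℝ) : vec3 a b c 2 = c := rfl

theorem norm_sq_eq_sum_coord_sq (x : E3) : ‖x‖ ^ 2 = x 0 ^ 2 + x 1 ^ 2 + x 2 ^ 2 := by
  simp [real_norm_sq_eq, Fin.sum_univ_three]

theorem isOpen_southPatch : IsOpen southPatch := by
  have hcoord (i : Fin 3) : Continuous fun x : E3 => x i := by fun_prop
  exact isOpen_compl_iff.2 <| (isClosed_eq (hcoord 0) continuous_const).inter
    ((isClosed_eq (hcoord 1) continuous_const).inter (isClosed_le continuous_const (hcoord 2)))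

theorem coord_two_lt_norm_of_mem_southPatch {x : E3} (hx : x ∈ southPatch) : x 2 < ‖x‖ := by
  by_cases h2 : x 2 < 0
  · exact h2.trans_le (norm_nonneg x)
  · have h01 : x 0 ≠ 0 ∨ x 1 ≠ 0 := by
      by_contra! h
      exact hx ⟨h.1, h.2, not_lt.1 h2⟩
    have hpos : 0 < x 0 ^ 2 + x 1 ^ 2 := by
      rcases h01 with h | h <;> positivity
    nlinarith [norm_nonneg x, norm_sq_eq_sum_coord_sq x]

theorem ne_zero_of_mem_southPatch {x : E3} (hx : x ∈ southPatch) : x ≠ 0 := by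
  rintro rfl
  simpa using coord_two_lt_norm_of_mem_southPatch hx

theorem pderiv3_smul {φ : E3 → ℝ} {V : E3 → E3} {x : E3} (hφ : DifferentiableAt ℝ φ x)
    (hV : DifferentiableAt ℝ V x) (i j : Fin 3) :
    pderiv3 (fun y => φ y • V y) i j x =
      fderiv ℝ φ x (single i 1) * V x j + φ x * pderiv3 V i j x := by
  have hVj : DifferentiableAt ℝ (fun y => V y j) x := (differentiableAt_piLp 2).1 hV j
  simp only [pderiv3, PiLp.smul_apply, smul_eq_mul, fderiv_fun_mul hφ hVj,
    add_apply, smul_apply, smul_eq_mul]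
  ring

def azimuthalField (y : E3) : E3 := vec3 (-(y 1)) (y 0) 0

theorem contDiff_azimuthalField {n : WithTop ℕ∞} : ContDiff ℝ n azimuthalField := by
  refine (contDiff_piLp 2).2 fun j => ?_
  fin_cases j <;>
    simp only [azimuthalField, Fin.isValue, Fin.zero_eta, Fin.mk_one, Fin.reduceFinMk,
      vec3_apply_zero, vec3_apply_one, vec3_apply_two] <;>
    fun_prop

theorem pderiv3_azimuthalField (x : E3) (i j : Fin 3) :
    pderiv3 azimuthalField i j x = azimuthalField (single i 1) j := by
  fin_cases j <;> simp [pderiv3, azimuthalField, fderiv_euclideanSpace_apply]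

theorem curl_smul_azimuthalField {φ : E3 → ℝ} {x : E3} (hφ : DifferentiableAt ℝ φ x) :
    curl (fun y => φ y • azimuthalField y) x =
      vec3 (-(x 0 * fderiv ℝ φ x (single 2 1))) (-(x 1 * fderiv ℝ φ x (single 2 1)))
        (x 0 * fderiv ℝ φ x (single 0 1) + x 1 * fderiv ℝ φ x (single 1 1) + 2 * φ x) := by
  have hV : DifferentiableAt ℝ azimuthalField x :=
    (contDiff_azimuthalField (n := 1)).differentiable one_ne_zero x
  simp only [curl, pderiv3_smul hφ hV, pderiv3_azimuthalField]
  simp only [Fin.isValue, azimuthalField, vec3_apply_zero, vec3_apply_one, vec3_apply_two,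
    PiLp.single_eq_same, ne_eq, zero_ne_one, one_ne_zero, Fin.reduceEq, not_false_eq_true,
    PiLp.single_eq_of_ne, neg_zero]
  congr 1 <;> ring

def wuYangSouthCoeff (G : ℝ) (y : E3) : ℝ := -G / (‖y‖ * (‖y‖ - y 2))

theorem wuYangSouth_eq_smul (G : ℝ) :
    wuYangSouth G = fun y => wuYangSouthCoeff G y • azimuthalField y := rfl

theorem contDiffAt_wuYangSouthCoeff (G : ℝ) {n : WithTop ℕ∞} {x : E3} (hx : x ∈ southPatch) :
    ContDiffAt ℝ n (wuYangSouthCoeff G) x := by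
  have hx0 := ne_zero_of_mem_southPatch hx
  have hD : ‖x‖ * (‖x‖ - x 2) ≠ 0 :=
    mul_ne_zero (norm_ne_zero_iff.2 hx0) (sub_pos.2 (coord_two_lt_norm_of_mem_southPatch hx)).ne'
  exact contDiffAt_const.div ((contDiffAt_norm ℝ hx0).mul ((contDiffAt_norm ℝ hx0).sub
    (proj (𝕜 := ℝ) (2 : Fin 3)).contDiff.contDiffAt)) hD

theorem contDiffOn_wuYangSouth (G : ℝ) (n : WithTop ℕ∞) :
    ContDiffOn ℝ n (wuYangSouth G) southPatch := fun _ hx =>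
  ((contDiffAt_wuYangSouthCoeff G hx).smul contDiff_azimuthalField.contDiffAt).contDiffWithinAt

theorem fderiv_wuYangSouthCoeff_apply (G : ℝ) {x : E3} (hx : x ∈ southPatch) (v : E3) :
    fderiv ℝ (wuYangSouthCoeff G) x v =
      G * ((2 * ‖x‖ - x 2) * inner ℝ x v - ‖x‖ ^ 2 * v 2) / (‖x‖ * (‖x‖ * (‖x‖ - x 2)) ^ 2) := by
  have hx0 := ne_zero_of_mem_southPatch hx
  have hr : ‖x‖ ≠ 0 := norm_ne_zero_iff.2 hx0
  have hz : ‖x‖ - x 2 ≠ 0 := (sub_pos.2 (coord_two_lt_norm_of_mem_southPatch hx)).ne'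
  have hnorm := hasFDerivAt_norm_of_ne_zero hx0
  have hden : HasFDerivAt (fun y : E3 => ‖y‖ * (‖y‖ - y 2)) _ x :=
    hnorm.mul (hnorm.sub (proj (𝕜 := ℝ) (2 : Fin 3)).hasFDerivAt)
  have hcoeff := ((hasDerivAt_inv (mul_ne_zero hr hz)).const_mul (-G)).comp_hasFDerivAt x hden
  rw [show wuYangSouthCoeff G = (fun t => -G * t⁻¹) ∘ fun y : E3 => ‖y‖ * (‖y‖ - y 2) from rfl,
    hcoeff.fderiv]
  simp only [smul_add, add_apply, smul_apply, sub_apply, coe_innerSL_apply, smul_eq_mul,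
    PiLp.proj_apply]
  field_simp
  ring

/-- The Wu–Yang south potential is a nonsingular `C¹` local potential for the monopole
field on its patch. -/
theorem wuYangSouth_is_local_potential (G : ℝ) :
    ContDiffOn ℝ 1 (wuYangSouth G) southPatch ∧
      ∀ x ∈ southPatch, curl (wuYangSouth G) x = monopoleField G x := by
  refine ⟨contDiffOn_wuYangSouth G 1, fun x hx => ?_⟩
  have hφ : DifferentiableAt ℝ (wuYangSouthCoeff G) x :=
    (contDiffAt_wuYangSouthCoeff G (n := 1) hx).differentiableAt one_ne_zero
  have hr : ‖x‖ ≠ 0 := norm_ne_zero_iff.2 (ne_zero_of_mem_southPatch hx)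
  have hz : ‖x‖ - x 2 ≠ 0 := (sub_pos.2 (coord_two_lt_norm_of_mem_southPatch hx)).ne'
  rw [wuYangSouth_eq_smul, curl_smul_azimuthalField hφ]
  simp only [fderiv_wuYangSouthCoeff_apply G hx, inner_single_right]
  ext j
  fin_cases j <;>
    simp only [Fin.isValue, Real.ringHom_apply, one_mul, PiLp.single_eq_same, mul_one, ne_eq,
      Fin.reduceEq, not_false_eq_true, PiLp.single_eq_of_ne, mul_zero, sub_zero, Fin.zero_eta,
      Fin.mk_one, Fin.reduceFinMk, vec3_apply_zero, vec3_apply_one, vec3_apply_two,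
      wuYangSouthCoeff, monopoleField, PiLp.smul_apply, smul_eq_mul] <;>
    field_simp
  · ring
  · ring
  · linear_combination (-G * (2 * ‖x‖ - x 2)) * norm_sq_eq_sum_coord_sq x
end
end

section
/- Let G be a real number, and let A_N(x) = (G / (‖x‖(‖x‖ + x₃))) • (−x₂, x₁, 0) and A_S(x) = (−G / (‖x‖(‖x‖ − x₃))) • (−x₂, x₁, 0) be the Wu–Yang potentials. On the overlap of their domains, namely the complement of the full z-axis {x : x₁ = x₂ = 0} in ℝ³, the two potentials differ by the pure-gauge field: A_N(x) − A_S(x) = (2G / (x₁² + x₂²)) • (−x₂, x₁, 0), and this difference field has vanishing curl at every point of the overlap. -/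
noncomputable section

/-- The Wu–Yang north potential `A_N(x) = (G / (‖x‖(‖x‖ + x₃))) • (−x₂, x₁, 0)`. -/
def wuYangNorth (G : ℝ) (x : EuclideanSpace ℝ (Fin 3)) : EuclideanSpace ℝ (Fin 3) :=
  (G / (‖x‖ * (‖x‖ + x 2))) • vec3 (-(x 1)) (x 0) 0

/-- The pure-gauge difference field `W(x) = (2G / (x₁² + x₂²)) • (−x₂, x₁, 0)`. -/
def gaugeDiff (G : ℝ) (x : EuclideanSpace ℝ (Fin 3)) : EuclideanSpace ℝ (Fin 3) :=
  (2 * G / ((x 0) ^ 2 + (x 1) ^ 2)) • vec3 (-(x 1)) (x 0) 0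

/-! Both potentials are multiples of the azimuthal field `J x = (−x₂, x₁, 0)`, and since
`(‖x‖ + x₃)(‖x‖ − x₃) = x₁² + x₂²` their coefficients differ by `2G / (x₁² + x₂²)`.
By the product rule, `curl (f • J) = ∇f × J + 2f e₃ = (−x₁ ∂₃f, −x₂ ∂₃f, x₁ ∂₁f + x₂ ∂₂f + 2f)`.
For `f = 2G / (x₁² + x₂²)` the first two components vanish because `f` does not depend on `x₃`,
and the third by Euler's identity, `f` being homogeneous of degree `−2`. -/

open EuclideanSpace

local notation "ℝ³" => EuclideanSpace ℝ (Fin 3)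

def azimuthal : ℝ³ →L[ℝ] ℝ³ := LinearMap.toContinuousLinearMap
  { toFun := fun y => vec3 (-(y 1)) (y 0) 0
    map_add' := fun y z => by ext i; fin_cases i <;> simp [vec3]; ring
    map_smul' := fun c y => by ext i; fin_cases i <;> simp [vec3] }

@[simp] lemma azimuthal_apply (y : ℝ³) : azimuthal y = vec3 (-(y 1)) (y 0) 0 := rfl

lemma pderiv3_eq_of_hasFDerivAt {A : ℝ³ → ℝ³} {A' : ℝ³ →L[ℝ] ℝ³} {x : ℝ³}
    (h : HasFDerivAt A A' x) (i j : Fin 3) : pderiv3 A i j x = A' (single i 1) j := by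
  change fderiv ℝ (proj j ∘ A) x _ = _
  rw [((proj j).hasFDerivAt.comp x h).fderiv]
  rfl

lemma curl_smul_azimuthal {f : ℝ³ → ℝ} {f' : ℝ³ →L[ℝ] ℝ} {x : ℝ³} (hf : HasFDerivAt f f' x) :
    curl (fun y => f y • azimuthal y) x =
      vec3 (-(x 0 * f' (single 2 1))) (-(x 1 * f' (single 2 1)))
        (x 0 * f' (single 0 1) + x 1 * f' (single 1 1) + 2 * f x) := by
  have hA : HasFDerivAt (fun y => f y • azimuthal y)
      (f x • azimuthal + f'.smulRight (azimuthal x)) x := hf.smul azimuthal.hasFDerivAt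
  simp only [curl, pderiv3_eq_of_hasFDerivAt hA]
  ext i; fin_cases i <;> simp [vec3] <;> ring

lemma hasFDerivAt_const_div_sq_add_sq (c : ℝ) {x : ℝ³} (hx : x 0 ^ 2 + x 1 ^ 2 ≠ 0) :
    HasFDerivAt (fun y : ℝ³ => c / (y 0 ^ 2 + y 1 ^ 2))
      ((-(2 * c) / (x 0 ^ 2 + x 1 ^ 2) ^ 2) • (x 0 • proj 0 + x 1 • proj 1 : ℝ³ →L[ℝ] ℝ)) x := by
  have hq : HasFDerivAt (fun y : ℝ³ => y 0 ^ 2 + y 1 ^ 2)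
      ((2 * x 0) • proj 0 + (2 * x 1) • proj 1 : ℝ³ →L[ℝ] ℝ) x := by
    refine ((((proj (𝕜 := ℝ) (0 : Fin 3)).hasFDerivAt (x := x)).pow 2).fun_add
      (((proj (𝕜 := ℝ) (1 : Fin 3)).hasFDerivAt (x := x)).pow 2)).congr_fderiv ?_
    ext v
    simp
  simp only [div_eq_mul_inv]
  refine (((hasDerivAt_inv hx).comp_hasFDerivAt x hq).const_mul c).congr_fderiv ?_
  ext v
  simp
  ring

lemma curl_gaugeDiff (G : ℝ) {x : ℝ³} (hx : x 0 ^ 2 + x 1 ^ 2 ≠ 0) :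
    curl (gaugeDiff G) x = 0 := by
  change curl (fun y => (2 * G / (y 0 ^ 2 + y 1 ^ 2)) • azimuthal y) x = 0
  rw [curl_smul_azimuthal (hasFDerivAt_const_div_sq_add_sq (2 * G) hx)]
  ext i
  fin_cases i <;> simp [vec3]
  field_simp
  ring

lemma wuYangNorth_sub_wuYangSouth (G : ℝ) {x : ℝ³} (hx : 0 < x 0 ^ 2 + x 1 ^ 2) :
    wuYangNorth G x - wuYangSouth G x = gaugeDiff G x := by
  have hnorm : ‖x‖ ^ 2 = x 0 ^ 2 + x 1 ^ 2 + x 2 ^ 2 := by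
    simp [real_norm_sq_eq, Fin.sum_univ_three]
  have hpos : 0 < ‖x‖ := norm_pos_iff.mpr fun h => by simp [h] at hx
  have hplus : 0 < ‖x‖ + x 2 := by nlinarith
  have hminus : 0 < ‖x‖ - x 2 := by nlinarith
  rw [wuYangNorth, wuYangSouth, gaugeDiff, ← sub_smul]
  congr 1
  field_simp
  linear_combination (-(2 * G * ‖x‖)) * hnorm

/-- On the overlap of their domains (the complement of the full `z`-axis), the Wu–Yang
potentials differ by the pure-gauge field, and this difference field is curl-free there. -/
theorem wuYang_gauge_difference (G : ℝ) :
    ∀ x : EuclideanSpace ℝ (Fin 3), ¬ (x 0 = 0 ∧ x 1 = 0) →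
      wuYangNorth G x - wuYangSouth G x = gaugeDiff G x ∧
        curl (gaugeDiff G) x = 0 := by
  intro x hx
  have hρ : 0 < x 0 ^ 2 + x 1 ^ 2 :=
    (by positivity : (0 : ℝ) ≤ _).lt_of_ne' (by rwa [sq, sq, Ne, mul_self_add_mul_self_eq_zero])
  exact ⟨wuYangNorth_sub_wuYangSouth G hρ, curl_gaugeDiff G hρ.ne'⟩
end
end
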